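/- On the elliptic curve E over Q with coefficients (a1,a2,a3,a4,a6) = (1, -1, 1, -244537673336319601463803487168961769270757573821859853707, 961710182053183034546222979258806817743270682028964434238957830989898438151121499931), there exists a rational point of order exactly 2, namely with x-coordinate -69288588686111702678625616725/4. -/

import Mathlib

def E : WeierstrassCurve.Affine ℚ :=
  ⟨1, -1, 1, -244537673336319601463803487168961769270757573821859853707,
    961710182053183034546222979258806817743270682028964434238957830989898438151121499931⟩

/-! A point `(x, y)` of an elliptic curve equals its own negative exactly when `y` is fixed by
`y ↦ -y - a₁x - a₃`; being nonzero, it then has order 2. For `E` this forces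
`y = -(x + 1)/2`, and it remains to check that this point lies on the curve. -/

namespace WeierstrassCurve.Affine.Point

lemma addOrderOf_some_eq_two_of_Y_eq {F : Type*} [Field F] [DecidableEq F]
    {W : WeierstrassCurve.Affine F} {x y : F} (h : W.Nonsingular x y) (hy : y = W.negY x y) :
    addOrderOf (some x y h) = 2 :=
  addOrderOf_eq_prime (p := 2) (by rw [two_smul]; exact add_self_of_Y_eq hy) (some_ne_zero h)

end WeierstrassCurve.Affine.Point

/-- On the rank-20 record curve with torsion `ℤ/2ℤ`, there is a rational point of order
exactly 2 with `x`-coordinate `-69288588686111702678625616725/4`. -/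
theorem point_order_two :
    ∃ y : ℚ, ∃ h : E.Nonsingular (-69288588686111702678625616725 / 4) y,
      addOrderOf (WeierstrassCurve.Affine.Point.some _ _ h) = 2 := by
  have hy : (69288588686111702678625616721 / 8 : ℚ) =
      E.negY (-69288588686111702678625616725 / 4) (69288588686111702678625616721 / 8) := by
    simp only [WeierstrassCurve.Affine.negY, E]
    norm_num
  have h : E.Nonsingular (-69288588686111702678625616725 / 4)
      (69288588686111702678625616721 / 8) := by
    rw [WeierstrassCurve.Affine.nonsingular_iff, WeierstrassCurve.Affine.equation_iff]
    simp only [E]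
    norm_num
  exact ⟨_, h, WeierstrassCurve.Affine.Point.addOrderOf_some_eq_two_of_Y_eq h hy⟩
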